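/- Let (V, {Mₙ(V)⁺}, {|·|_{m,n}}) be an absolutely matrix ordered space and let (𝔙, 𝔙⁺) be its matricial inductive limit with embeddings Tₙ : Mₙ(V) → 𝔙. Define |𝔳| := T_{o(𝔳)}(|T_{o(𝔳)}⁻¹(𝔳)|) for 𝔳 ∈ 𝔙. Then (𝔙, 𝔙⁺, |·|) is a non-degenerate absolutely ordered 𝔉-bimodule; in particular, if 𝔲 and 𝔳 are 𝔉-independent then |𝔲 + 𝔳| = |𝔲| + |𝔳|. -/

import Mathlib

noncomputable section

open scoped Matrix.Norms.L2Operator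

/-! ### The *-algebra 𝔉 of ∞×∞ complex matrices with finitely many nonzero entries -/

/-- `∞ × ∞` complex matrices (indexed by `ℕ × ℕ`). -/
abbrev FMat := ℕ → ℕ → ℂ

/-- The matrix has (at most) finitely many nonzero entries: it is supported in some
`n × n` top-left block. -/
def IsFin (a : FMat) : Prop := ∃ n, ∀ i j, (n ≤ i ∨ n ≤ j) → a i j = 0

/-- Matrix multiplication in `𝔉` (the `tsum` is a finite sum for finitely supported
matrices). -/
def fmul (a b : FMat) : FMat := fun i k => ∑' j, a i j * b j k

/-- The involution (conjugate transpose) on `𝔉`. -/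
def fstar (a : FMat) : FMat := fun i j => starRingEnd ℂ (a j i)

/-- The matrix unit `𝔢_{i,j}`. -/
def eUnit (i j : ℕ) : FMat := fun k l => if k = i ∧ l = j then 1 else 0

/-- `𝔍ₙ = Σ_{i<n} 𝔢_{i,i}`, the partial identities. -/
def JMat (n : ℕ) : FMat := fun k l => if k = l ∧ k < n then 1 else 0

/-- `𝔎ₙ = Σ_{i<n} 𝔢_{i,n+i}`, used for `2×2`-block constructions. -/
def KMat (n : ℕ) : FMat := fun k l => if l = k + n ∧ k < n then 1 else 0

/-- The diagonal idempotent `Σ_{i ∈ s} 𝔢_{i,i}` associated to a finite set `s ⊂ ℕ`. -/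
def finsetDiag (s : Finset ℕ) : FMat := fun k l => if k = l ∧ k ∈ s then 1 else 0

/-- The operator norm on `𝔉`: the supremum of the (C*-algebra) operator norms of the
finite top-left blocks (for a finitely supported matrix the blocks stabilize). -/
def fnorm (a : FMat) : ℝ :=
  ⨆ n : ℕ, ‖(Matrix.of fun i j : Fin n => a i j : Matrix (Fin n) (Fin n) ℂ)‖

/-- The order `o(𝔞)` of a finitely supported matrix: the least `n` such that `𝔞` is
supported in the top-left `n × n` block. -/
def matOrd (a : FMat) : ℕ := sInf {n | ∀ i j, (n ≤ i ∨ n ≤ j) → a i j = 0}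

/-- A local unitary in `𝔉`: `𝔞*𝔞 = 𝔍_{o(𝔞)} = 𝔞𝔞*`. -/
def IsLocalUnitary (a : FMat) : Prop :=
  IsFin a ∧ fmul (fstar a) a = JMat (matOrd a) ∧ fmul a (fstar a) = JMat (matOrd a)

/-! ### Non-degenerate *-𝔉-bimodules -/

/-- A non-degenerate `*`-`𝔉`-bimodule structure on a complex vector space `V`:
left and right actions of (finitely supported) infinite matrices together with an
involution, compatible with each other and with the complex scalars, such that every
element is `𝔍ₙ·v·𝔍ₙ` for some `n`. -/
structure FBimod (V : Type*) [AddCommGroup V] [Module ℂ V] where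
  lsmul : FMat → V → V
  rsmul : V → FMat → V
  star : V → V
  lsmul_add : ∀ a u v, lsmul a (u + v) = lsmul a u + lsmul a v
  rsmul_add : ∀ u v b, rsmul (u + v) b = rsmul u b + rsmul v b
  add_lsmul : ∀ a b v, IsFin a → IsFin b → lsmul (a + b) v = lsmul a v + lsmul b v
  rsmul_add' : ∀ v a b, IsFin a → IsFin b → rsmul v (a + b) = rsmul v a + rsmul v b
  smul_lsmul : ∀ (c : ℂ) a v, IsFin a → lsmul (c • a) v = c • lsmul a v
  smul_rsmul : ∀ (c : ℂ) v a, IsFin a → rsmul v (c • a) = c • rsmul v a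
  mul_lsmul : ∀ a b v, IsFin a → IsFin b → lsmul (fmul a b) v = lsmul a (lsmul b v)
  rsmul_mul : ∀ v a b, IsFin a → IsFin b → rsmul v (fmul a b) = rsmul (rsmul v a) b
  lsmul_rsmul : ∀ a v b, IsFin a → IsFin b → rsmul (lsmul a v) b = lsmul a (rsmul v b)
  star_add : ∀ u v, star (u + v) = star u + star v
  star_star : ∀ v, star (star v) = v
  star_lsmul : ∀ a v, IsFin a → star (lsmul a v) = rsmul (star v) (fstar a)
  star_rsmul : ∀ v a, IsFin a → star (rsmul v a) = lsmul (fstar a) (star v)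
  smul_compat : ∀ (c : ℂ) (n : ℕ) v, lsmul (JMat n) (rsmul v (JMat n)) = v →
    lsmul (c • JMat n) v = c • v
  nondeg : ∀ v, ∃ n, lsmul (JMat n) (rsmul v (JMat n)) = v

namespace FBimod

variable {V : Type*} [AddCommGroup V] [Module ℂ V] (M : FBimod V)

/-- `𝔍ₙ 𝔳 𝔍ₙ`. -/
def cut (n : ℕ) (v : V) : V := M.lsmul (JMat n) (M.rsmul v (JMat n))

/-- The order `o(𝔳)`: the smallest `n` with `𝔍ₙ 𝔳 𝔍ₙ = 𝔳`. -/
def ord (v : V) : ℕ := sInf {n | M.cut n v = v}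

/-- `𝔞* 𝔳 𝔞`. -/
def conj (a : FMat) (v : V) : V := M.lsmul (fstar a) (M.rsmul v a)

/-- `C` is a bimodule cone: consists of self-adjoint elements, is closed under
addition and under `𝔳 ↦ 𝔞*𝔳𝔞` for `𝔞 ∈ 𝔉`. -/
def IsCone (C : Set V) : Prop :=
  (∀ v ∈ C, M.star v = v) ∧ (∀ u ∈ C, ∀ v ∈ C, u + v ∈ C) ∧
    (∀ v ∈ C, ∀ a : FMat, IsFin a → M.conj a v ∈ C)

/-- The cone `C` is proper: `C ∩ (−C) = {0}`. -/
def ConeProper (C : Set V) : Prop := ∀ v ∈ C, -v ∈ C → v = 0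

/-- The cone `C` is Archimedean. -/
def ConeArch (C : Set V) : Prop :=
  ∀ u ∈ C, ∀ v : V, M.star v = v → (∀ k : ℝ, 0 < k → (k : ℂ) • u + v ∈ C) → v ∈ C

/-- The cone `C` is generating. -/
def ConeGen (C : Set V) : Prop :=
  ∀ v : V, ∃ v₀ ∈ C, ∃ v₁ ∈ C, ∃ v₂ ∈ C, ∃ v₃ ∈ C,
    v = v₀ + Complex.I • v₁ - v₂ - Complex.I • v₃

/-- `(𝔳₁, 𝔳₂)ₙ⁺ = 𝔳₁ + 𝔎ₙ* 𝔳₂ 𝔎ₙ` (the diagonal `2×2`-block `diag(𝔳₁,𝔳₂)`). -/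
def pairPlus (n : ℕ) (v₁ v₂ : V) : V :=
  v₁ + M.lsmul (fstar (KMat n)) (M.rsmul v₂ (KMat n))

/-- `saₙ(𝔳) = 𝔍ₙ 𝔳 𝔎ₙ + 𝔎ₙ* 𝔳* 𝔍ₙ` (the off-diagonal `2×2`-block of `𝔳`). -/
def san (n : ℕ) (v : V) : V :=
  M.lsmul (JMat n) (M.rsmul v (KMat n)) +
    M.lsmul (fstar (KMat n)) (M.rsmul (M.star v) (JMat n))

/-- `𝔲` and `𝔳` are `𝔉`-independent: compressed onto disjoint diagonal blocks. -/
def FIndep (u v : V) : Prop :=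
  ∃ I J : Finset ℕ, Disjoint I J ∧
    M.lsmul (finsetDiag I) (M.rsmul u (finsetDiag I)) = u ∧
    M.lsmul (finsetDiag J) (M.rsmul v (finsetDiag J)) = v

/-- `(𝔙, C, abs)` is a non-degenerate absolutely ordered `𝔉`-bimodule
(Definition 18 of the paper). -/
structure IsAbsOrd (C : Set V) (abs : V → V) : Prop where
  cone : M.IsCone C
  abs_mem : ∀ v, abs v ∈ C
  ord_abs_le : ∀ v, M.ord (abs v) ≤ M.ord v
  abs_of_mem : ∀ v ∈ C, abs v = v
  pos_part : ∀ v, M.pairPlus (M.ord v) (abs (M.star v)) (abs v) + M.san (M.ord v) v ∈ C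
  abs_smul_le : ∀ (a b : FMat), IsFin a → IsFin b → ∀ v,
    (fnorm a : ℂ) • abs (M.rsmul (abs v) b) - abs (M.lsmul a (M.rsmul v b)) ∈ C
  indep_add : ∀ u v, M.FIndep u v → abs (u + v) = abs u + abs v
  absorb : ∀ u ∈ C, ∀ v ∈ C, ∀ w ∈ C, abs (u - v) = u + v → v - w ∈ C →
    abs (u - w) = u + w
  ortho_pm : ∀ u ∈ C, ∀ v ∈ C, ∀ w ∈ C, abs (u - v) = u + v → abs (u - w) = u + w →
    abs (u - abs (v + w)) = u + abs (v + w) ∧ abs (u - abs (v - w)) = u + abs (v - w)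

/-- `eⁿ = Σ_{i<n} 𝔢_{i,0} 𝔢 𝔢_{0,i}` for an element `𝔢` of order `1`. -/
def epow (e : V) (n : ℕ) : V :=
  ∑ i ∈ Finset.range n, M.lsmul (eUnit i 0) (M.rsmul e (eUnit 0 i))

/-- `𝔢` is a local order unit for `(𝔙, C)`. -/
def IsLocalOrderUnit (C : Set V) (e : V) : Prop :=
  e ∈ C ∧ M.cut 1 e = e ∧ ∀ v : V, M.cut 1 v = v → ∃ k : ℝ, 0 < k ∧
    M.pairPlus 1 ((k : ℂ) • e) ((k : ℂ) • e) + M.san 1 v ∈ C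

/-- `(𝔙, C, 𝔢)` is a local `𝔉`-order unit bimodule. -/
def IsLocalUnitBimod (C : Set V) (e : V) : Prop :=
  M.IsCone C ∧ ConeProper C ∧ M.ConeArch C ∧ M.IsLocalOrderUnit C e

/-- The norm associated to a local order unit:
`‖𝔳‖ = inf { k > 0 : (k𝔢^{o(𝔳)}, k𝔢^{o(𝔳)})⁺_{o(𝔳)} + sa_{o(𝔳)}(𝔳) ∈ C }`. -/
def lnorm (C : Set V) (e : V) (v : V) : ℝ :=
  sInf {k : ℝ | 0 < k ∧
    M.pairPlus (M.ord v) ((k : ℂ) • M.epow e (M.ord v)) ((k : ℂ) • M.epow e (M.ord v)) +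
      M.san (M.ord v) v ∈ C}

/-- `𝔲 ⊥_∞ 𝔳` with respect to the local-order-unit norm. -/
def PerpInf (C : Set V) (e : V) (u v : V) : Prop :=
  ∀ k₁ k₂ : ℝ, M.lnorm C e ((k₁ : ℂ) • u + (k₂ : ℂ) • v) =
    max (M.lnorm C e ((k₁ : ℂ) • u)) (M.lnorm C e ((k₂ : ℂ) • v))

end FBimod
/-! ### Matrices over a complex *-vector space -/

section MatrixLevel

variable {V : Type*} [AddCommGroup V] [Module ℂ V] [StarAddMonoid V] [StarModule ℂ V]

/-- Conjugate transpose of a rectangular matrix over a `*`-vector space. -/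
def mstar {m n : ℕ} (v : Matrix (Fin m) (Fin n) V) : Matrix (Fin n) (Fin m) V :=
  fun i j => star (v j i)

/-- Left action of a scalar matrix: `(a v)_{ij} = Σ_k a_{ik} v_{kj}`. -/
def aSmul {r m n : ℕ} (a : Matrix (Fin r) (Fin m) ℂ) (v : Matrix (Fin m) (Fin n) V) :
    Matrix (Fin r) (Fin n) V :=
  fun i j => ∑ k, a i k • v k j

/-- Right action of a scalar matrix: `(v b)_{ij} = Σ_k b_{kj} • v_{ik}`. -/
def smulB {m n s : ℕ} (v : Matrix (Fin m) (Fin n) V) (b : Matrix (Fin n) (Fin s) ℂ) :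
    Matrix (Fin m) (Fin s) V :=
  fun i j => ∑ k, b k j • v i k

/-- Direct sum (block diagonal) of rectangular matrices over `V`. -/
def dsum {m n r s : ℕ} (v : Matrix (Fin m) (Fin n) V) (w : Matrix (Fin r) (Fin s) V) :
    Matrix (Fin (m + r)) (Fin (n + s)) V :=
  fun i j =>
    if hi : (i : ℕ) < m then
      (if hj : (j : ℕ) < n then v ⟨i, hi⟩ ⟨j, hj⟩ else 0)
    else
      (if hj : (j : ℕ) < n then 0
       else w ⟨(i : ℕ) - m, by have := i.isLt; omega⟩ ⟨(j : ℕ) - n, by have := j.isLt; omega⟩)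

end MatrixLevel

/-- The L2-operator norm of a rectangular complex scalar matrix. -/
def cnorm {r m : ℕ} (a : Matrix (Fin r) (Fin m) ℂ) : ℝ := ‖a‖

/-- Embedding of a finite rectangular complex matrix into `𝔉`. -/
def embC {r m : ℕ} (a : Matrix (Fin r) (Fin m) ℂ) : FMat :=
  fun i j => if hi : i < r then (if hj : j < m then a ⟨i, hi⟩ ⟨j, hj⟩ else 0) else 0

/-- `e ⊕ ⋯ ⊕ e`: the diagonal matrix with constant diagonal `e`. -/
def diagE {V : Type*} [AddCommGroup V] (e : V) (n : ℕ) : Matrix (Fin n) (Fin n) V :=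
  Matrix.of fun i j => if i = j then e else 0

/-! ### Absolutely matrix ordered spaces and absolute matrix order unit spaces -/

/-- An absolutely matrix ordered space structure on a complex `*`-vector space `V`:
matrix cones `Mₙ(V)⁺` and absolute values `|·|_{m,n} : M_{m,n}(V) → Mₙ(V)⁺`
(Definition 4.1 of Karn-Kumar). -/
structure AMOS (V : Type*) [AddCommGroup V] [Module ℂ V] [StarAddMonoid V]
    [StarModule ℂ V] where
  pos : ∀ n : ℕ, Set (Matrix (Fin n) (Fin n) V)
  abs : ∀ m n : ℕ, Matrix (Fin m) (Fin n) V → Matrix (Fin n) (Fin n) V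
  pos_star : ∀ n, ∀ v ∈ pos n, mstar v = v
  pos_add : ∀ n, ∀ u ∈ pos n, ∀ v ∈ pos n, u + v ∈ pos n
  pos_conj : ∀ m n (a : Matrix (Fin n) (Fin m) ℂ), ∀ v ∈ pos n,
    aSmul a.conjTranspose (smulB v a) ∈ pos m
  abs_mem : ∀ m n v, abs m n v ∈ pos n
  abs_of_pos : ∀ n, ∀ v ∈ pos n, abs n n v = v
  abs_add_self : ∀ n (v : Matrix (Fin n) (Fin n) V), mstar v = v →
    abs n n v + v ∈ pos n ∧ abs n n v - v ∈ pos n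
  abs_real_smul : ∀ n (k : ℝ) (v : Matrix (Fin n) (Fin n) V), mstar v = v →
    abs n n ((k : ℂ) • v) = ((|k| : ℝ) : ℂ) • abs n n v
  absorb : ∀ n, ∀ u ∈ pos n, ∀ v ∈ pos n, ∀ w ∈ pos n,
    abs n n (u - v) = u + v → v - w ∈ pos n → abs n n (u - w) = u + w
  ortho_pm : ∀ n, ∀ u ∈ pos n, ∀ v ∈ pos n, ∀ w ∈ pos n,
    abs n n (u - v) = u + v → abs n n (u - w) = u + w →
    abs n n (u - abs n n (v + w)) = u + abs n n (v + w) ∧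
      abs n n (u - abs n n (v - w)) = u + abs n n (v - w)
  abs_smul_le : ∀ (r m n s : ℕ) (α : Matrix (Fin r) (Fin m) ℂ)
    (v : Matrix (Fin m) (Fin n) V) (β : Matrix (Fin n) (Fin s) ℂ),
    (cnorm α : ℂ) • abs n s (smulB (abs m n v) β) - abs r s (aSmul α (smulB v β)) ∈ pos s
  abs_dsum : ∀ (m n r s : ℕ) (v : Matrix (Fin m) (Fin n) V) (w : Matrix (Fin r) (Fin s) V),
    abs (m + r) (n + s) (dsum v w) = dsum (abs m n v) (abs r s w)

/-- A matrix order unit structure on top of an absolutely matrix ordered space: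
an order unit `e` with `V⁺` proper and each `Mₙ(V)⁺` Archimedean. -/
structure AMOUS (V : Type*) [AddCommGroup V] [Module ℂ V] [StarAddMonoid V]
    [StarModule ℂ V] extends AMOS V where
  e : V
  e_pos : diagE e 1 ∈ pos 1
  proper : ∀ v ∈ pos 1, -v ∈ pos 1 → v = 0
  arch : ∀ n (v : Matrix (Fin n) (Fin n) V), mstar v = v →
    (∀ k : ℝ, 0 < k → (k : ℂ) • diagE e n + v ∈ pos n) →
    v ∈ pos n
  unit : ∀ n (v : Matrix (Fin n) (Fin n) V), mstar v = v →
    ∃ k : ℝ, 0 < k ∧ (k : ℂ) • diagE e n - v ∈ pos n ∧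
      (k : ℂ) • diagE e n + v ∈ pos n

namespace AMOUS

variable {V : Type*} [AddCommGroup V] [Module ℂ V] [StarAddMonoid V] [StarModule ℂ V]
variable (A : AMOUS V)

/-- `eⁿ = e ⊕ ⋯ ⊕ e ∈ Mₙ(V)`. -/
def eN (n : ℕ) : Matrix (Fin n) (Fin n) V := diagE A.e n

/-- The `2n × 2n` matrix `[[a, b], [c, d]]` of `n × n` blocks. -/
def block2 {n : ℕ} (a b c d : Matrix (Fin n) (Fin n) V) :
    Matrix (Fin (n + n)) (Fin (n + n)) V :=
  fun i j =>
    if hi : (i : ℕ) < n then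
      (if hj : (j : ℕ) < n then a ⟨i, hi⟩ ⟨j, hj⟩
       else b ⟨i, hi⟩ ⟨(j : ℕ) - n, by have := j.isLt; omega⟩)
    else
      (if hj : (j : ℕ) < n then c ⟨(i : ℕ) - n, by have := i.isLt; omega⟩ ⟨j, hj⟩
       else d ⟨(i : ℕ) - n, by have := i.isLt; omega⟩ ⟨(j : ℕ) - n, by have := j.isLt; omega⟩)

end AMOUS
namespace AMOUS

variable {V : Type*} [AddCommGroup V] [Module ℂ V] [StarAddMonoid V] [StarModule ℂ V]
variable (A : AMOUS V)

/-- The matrix norms of a matrix order unit space: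
`‖v‖ₙ = inf { k > 0 : [[k eⁿ, v], [v*, k eⁿ]] ∈ M₂ₙ(V)⁺ }`. -/
def mnorm (n : ℕ) (v : Matrix (Fin n) (Fin n) V) : ℝ :=
  sInf {k : ℝ | 0 < k ∧
    block2 ((k : ℂ) • A.eN n) v (mstar v) ((k : ℂ) • A.eN n) ∈ A.pos (n + n)}

/-- Orthogonality `u ⊥ v` (for positive elements): `|u − v| = u + v`. -/
def Perp {n : ℕ} (u v : Matrix (Fin n) (Fin n) V) : Prop :=
  A.abs n n (u - v) = u + v

/-- `u ⊥_∞ v`: `‖k₁ u + k₂ v‖ = max {‖k₁ u‖, ‖k₂ v‖}` for all real `k₁, k₂`. -/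
def PerpInfM {n : ℕ} (u v : Matrix (Fin n) (Fin n) V) : Prop :=
  ∀ k₁ k₂ : ℝ, A.mnorm n ((k₁ : ℂ) • u + (k₂ : ℂ) • v) =
    max (A.mnorm n ((k₁ : ℂ) • u)) (A.mnorm n ((k₂ : ℂ) • v))

/-- `u ⊥_∞^a v`: absolute `∞`-orthogonality. -/
def PerpInfA {n : ℕ} (u v : Matrix (Fin n) (Fin n) V) : Prop :=
  ∀ u₁ ∈ A.pos n, ∀ v₁ ∈ A.pos n, u - u₁ ∈ A.pos n → v - v₁ ∈ A.pos n → A.PerpInfM u₁ v₁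

/-- `(V, {Mₙ(V)⁺}, {|·|}, e)` is an absolute matrix order unit space:
`⊥ = ⊥_∞^a` on each `Mₙ(V)⁺`. -/
def IsAbsolute : Prop :=
  ∀ n, ∀ u ∈ A.pos n, ∀ v ∈ A.pos n, (A.Perp u v ↔ A.PerpInfA u v)

/-- `p` is an order projection in `Mₙ(V)`: `p* = p` and `|2p − eⁿ| = eⁿ`. -/
def IsOP (n : ℕ) (p : Matrix (Fin n) (Fin n) V) : Prop :=
  mstar p = p ∧ A.abs n n ((2 : ℂ) • p - A.eN n) = A.eN n

/-- `v ∈ M_{m,n}(V)` is a partial isometry: `|v|` and `|v*|` are order projections. -/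
def IsPI {m n : ℕ} (v : Matrix (Fin m) (Fin n) V) : Prop :=
  A.IsOP n (A.abs m n v) ∧ A.IsOP m (A.abs n m (mstar v))

end AMOUS

/-- An element of `M_∞(V)`: a matrix at some level `n`. -/
def OPE (V : Type*) : Type _ := Σ n : ℕ, Matrix (Fin n) (Fin n) V

namespace OPE

variable {V : Type*} [AddCommGroup V] [Module ℂ V] [StarAddMonoid V] [StarModule ℂ V]

/-- Direct sum in `M_∞(V)`. -/
def d (p q : OPE V) : OPE V := ⟨p.1 + q.1, dsum p.2 q.2⟩

/-- The zero order projection (at level 1). -/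
def zero (V : Type*) [AddCommGroup V] : OPE V := ⟨1, 0⟩

end OPE

namespace AMOUS

variable {V : Type*} [AddCommGroup V] [Module ℂ V] [StarAddMonoid V] [StarModule ℂ V]
variable (A : AMOUS V)

/-- Membership in `𝒪𝒫_∞(V)`. -/
def IsOPE (p : OPE V) : Prop := A.IsOP p.1 p.2

/-- `eⁿ` as an element of `𝒪𝒫_∞(V)`. -/
def eOPE (n : ℕ) : OPE V := ⟨n, A.eN n⟩

/-- Partial isometric equivalence `p ∼ q` of order projections: there is a partial
isometry `v` with `p = |v*|` and `q = |v|`. -/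
def Sim (p q : OPE V) : Prop :=
  ∃ v : Matrix (Fin p.1) (Fin q.1) V,
    A.IsPI v ∧ p.2 = A.abs q.1 p.1 (mstar v) ∧ q.2 = A.abs p.1 q.1 v

/-- Condition (T). -/
def CondT : Prop :=
  ∀ (m n l : ℕ) (u : Matrix (Fin m) (Fin n) V) (v : Matrix (Fin l) (Fin n) V),
    A.IsPI u → A.IsPI v → A.abs m n u = A.abs l n v →
    ∃ w : Matrix (Fin m) (Fin l) V, A.IsPI w ∧
      A.abs l m (mstar w) = A.abs n m (mstar u) ∧ A.abs m l w = A.abs n l (mstar v)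

/-- Stabilized equivalence `p ≈ q`: `p ⊕ r ∼ q ⊕ r` for some order projection `r`. -/
def ASim (p q : OPE V) : Prop := ∃ r : OPE V, A.IsOPE r ∧ A.Sim (p.d r) (q.d r)

/-- A pair of order projections, representing an element `[(p,q)]` of `K₀(V)`. -/
def IsOPPair (x : OPE V × OPE V) : Prop := A.IsOPE x.1 ∧ A.IsOPE x.2

/-- The relation `(p₁,q₁) ≡ (p₂,q₂) ↔ p₁ ⊕ q₂ ≈ p₂ ⊕ q₁` defining `K₀(V)`. -/
def Krel (x y : OPE V × OPE V) : Prop := A.ASim (x.1.d y.2) (y.1.d x.2)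

/-- Addition of representatives of `K₀(V)` classes. -/
def kadd (x y : OPE V × OPE V) : OPE V × OPE V := (x.1.d y.1, x.2.d y.2)

/-- The representative of the zero class of `K₀(V)`. -/
def kzero : OPE V × OPE V := (OPE.zero V, OPE.zero V)

/-- Representative-level membership in the cone `K₀(V)⁺ = {[(p,0)] : p ∈ 𝒪𝒫_∞(V)}`. -/
def KPos (x : OPE V × OPE V) : Prop :=
  ∃ p : OPE V, A.IsOPE p ∧ A.Krel x (p, OPE.zero V)

/-- Representative-level order `[x] ≤ [y]` in `K₀(V)`: `[y] − [x] ∈ K₀(V)⁺`. -/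
def Kle (x y : OPE V × OPE V) : Prop :=
  ∃ r : OPE V, A.IsOPE r ∧ A.Krel (kadd x (r, OPE.zero V)) y

/-- The order projection `p ∈ Mₙ(V)` is finite: `q ∼ p` and `q ≥ p` imply `q = p`. -/
def FiniteOP (n : ℕ) (p : Matrix (Fin n) (Fin n) V) : Prop :=
  ∀ q : Matrix (Fin n) (Fin n) V, A.IsOP n q → A.Sim ⟨n, q⟩ ⟨n, p⟩ →
    q - p ∈ A.pos n → q = p

end AMOUS

/-! ### Maps between absolute matrix order unit spaces -/

section Maps

variable {V W : Type*} [AddCommGroup V] [Module ℂ V] [StarAddMonoid V] [StarModule ℂ V]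
  [AddCommGroup W] [Module ℂ W] [StarAddMonoid W] [StarModule ℂ W]

/-- The amplification `φₙ` (entrywise application) of a map. -/
def mmap (φ : V →ₗ[ℂ] W) {m n : ℕ} (v : Matrix (Fin m) (Fin n) V) :
    Matrix (Fin m) (Fin n) W :=
  fun i j => φ (v i j)

/-- `φ` is completely `|·|`-preserving: every amplification `φₙ` is `|·|`-preserving. -/
def CAbsPres (A : AMOUS V) (B : AMOUS W) (φ : V →ₗ[ℂ] W) : Prop :=
  ∀ (n : ℕ) (v : Matrix (Fin n) (Fin n) V), B.abs n n (mmap φ v) = mmap φ (A.abs n n v)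

/-- `φ` and `ψ` are completely orthogonal: `φₙ(u) ⊥ ψₙ(v)` for all positive `u, v`. -/
def COrth (A : AMOUS V) (B : AMOUS W) (φ ψ : V →ₗ[ℂ] W) : Prop :=
  ∀ (n : ℕ) (u v : Matrix (Fin n) (Fin n) V), u ∈ A.pos n → v ∈ A.pos n →
    B.Perp (mmap φ u) (mmap ψ v)

/-- The image of an element of `M_∞(V)` under (the amplifications of) `φ`. -/
def mmapOPE (φ : V →ₗ[ℂ] W) (p : OPE V) : OPE W := ⟨p.1, mmap φ p.2⟩

/-- `F` represents a group homomorphism `K₀(V) → K₀(W)` making the `K₀` diagram of `φ`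
commute: it maps `K₀`-representatives to `K₀`-representatives, respects the defining
relation `≡`, is additive, and satisfies `F([(p, 0)]) = [(φ(p), 0)]`. -/
def K0HomProp (A : AMOUS V) (B : AMOUS W) (φ : V →ₗ[ℂ] W)
    (F : OPE V × OPE V → OPE W × OPE W) : Prop :=
  (∀ x, A.IsOPPair x → B.IsOPPair (F x)) ∧
  (∀ x y, A.IsOPPair x → A.IsOPPair y → A.Krel x y → B.Krel (F x) (F y)) ∧
  (∀ x y, A.IsOPPair x → A.IsOPPair y → B.Krel (F (AMOUS.kadd x y)) (AMOUS.kadd (F x) (F y))) ∧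
  (∀ p : OPE V, A.IsOPE p → B.Krel (F (p, OPE.zero V)) (mmapOPE φ p, OPE.zero W))

/-- The completely bounded norm of `φ` with respect to the order unit matrix norms. -/
def cbNorm (A : AMOUS V) (B : AMOUS W) (φ : V →ₗ[ℂ] W) : ℝ :=
  ⨆ n : ℕ, sInf {c : ℝ | 0 ≤ c ∧
    ∀ v : Matrix (Fin n) (Fin n) V, B.mnorm n (mmap φ v) ≤ c * A.mnorm n v}

end Maps
/-! ### Matricial inductive limits -/

/-- `(𝕍, M)` together with the embeddings `Tₙ : Mₙ(V) → 𝕍` is the matricial inductive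
(direct) limit of the matrix levels of `V`: the `Tₙ` are injective `*`-linear maps,
compatible with the inclusions `v ↦ v ⊕ 0`, with image `𝔍ₙ 𝕍 𝔍ₙ`, intertwining the
scalar matrix actions with the `𝔉`-bimodule actions. -/
structure IsMatLimit (V : Type*) [AddCommGroup V] [Module ℂ V] [StarAddMonoid V]
    [StarModule ℂ V] {𝕍 : Type*} [AddCommGroup 𝕍] [Module ℂ 𝕍] (M : FBimod 𝕍)
    (T : ∀ n : ℕ, Matrix (Fin n) (Fin n) V → 𝕍) : Prop where
  map_add : ∀ n u v, T n (u + v) = T n u + T n v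
  map_smul : ∀ n (c : ℂ) v, T n (c • v) = c • T n v
  inj : ∀ n, Function.Injective (T n)
  map_star : ∀ n v, M.star (T n v) = T n (mstar v)
  embed : ∀ (n m : ℕ) (v : Matrix (Fin n) (Fin n) V),
    T (n + m) (dsum v (0 : Matrix (Fin m) (Fin m) V)) = T n v
  range : ∀ (n : ℕ) (x : 𝕍), M.cut n x = x → ∃ v, T n v = x
  cutT : ∀ n v, M.cut n (T n v) = T n v
  act : ∀ (n : ℕ) (a b : Matrix (Fin n) (Fin n) ℂ) (v : Matrix (Fin n) (Fin n) V),
    T n (aSmul a (smulB v b)) = M.lsmul (embC a) (M.rsmul (T n v) (embC b))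

/-- The axioms of an absolutely matrix ordered space `(V, {Mₙ(V)⁺}, {|·|ₙ})`,
formulated for the square levels. -/
structure IsAbsMatOrderedSq {V : Type*} [AddCommGroup V] [Module ℂ V] [StarAddMonoid V]
    [StarModule ℂ V] (pos : ∀ n : ℕ, Set (Matrix (Fin n) (Fin n) V))
    (abs : ∀ n : ℕ, Matrix (Fin n) (Fin n) V → Matrix (Fin n) (Fin n) V) : Prop where
  pos_star : ∀ n, ∀ v ∈ pos n, mstar v = v
  pos_add : ∀ n, ∀ u ∈ pos n, ∀ v ∈ pos n, u + v ∈ pos n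
  pos_conj : ∀ m n (a : Matrix (Fin n) (Fin m) ℂ), ∀ v ∈ pos n,
    aSmul a.conjTranspose (smulB v a) ∈ pos m
  abs_mem : ∀ n v, abs n v ∈ pos n
  abs_of_pos : ∀ n, ∀ v ∈ pos n, abs n v = v
  abs_add_self : ∀ n (v : Matrix (Fin n) (Fin n) V), mstar v = v →
    abs n v + v ∈ pos n ∧ abs n v - v ∈ pos n
  abs_real_smul : ∀ n (k : ℝ) (v : Matrix (Fin n) (Fin n) V), mstar v = v →
    abs n ((k : ℂ) • v) = ((|k| : ℝ) : ℂ) • abs n v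
  absorb : ∀ n, ∀ u ∈ pos n, ∀ v ∈ pos n, ∀ w ∈ pos n,
    abs n (u - v) = u + v → v - w ∈ pos n → abs n (u - w) = u + w
  ortho_pm : ∀ n, ∀ u ∈ pos n, ∀ v ∈ pos n, ∀ w ∈ pos n,
    abs n (u - v) = u + v → abs n (u - w) = u + w →
    abs n (u - abs n (v + w)) = u + abs n (v + w) ∧
      abs n (u - abs n (v - w)) = u + abs n (v - w)
  abs_smul_le : ∀ (n : ℕ) (α β : Matrix (Fin n) (Fin n) ℂ) (v : Matrix (Fin n) (Fin n) V),
    (cnorm α : ℂ) • abs n (smulB (abs n v) β) - abs n (aSmul α (smulB v β)) ∈ pos n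
  abs_dsum : ∀ (m n : ℕ) (u : Matrix (Fin m) (Fin m) V) (v : Matrix (Fin n) (Fin n) V),
    abs (m + n) (dsum u v) = dsum (abs m u) (abs n v)

/-!
Everything is read off from the matrix levels along the injective maps `Tₙ`: finitely many
elements of `𝔙` and finitely supported scalar matrices all live at a common level `N`, an element
of `𝔙⁺` is positive at every level at which it lives, and `|Tₙ v| = Tₙ |v|` at every level `n`,
not only at `n = o(Tₙ v)`, because `|v ⊕ 0| = |v| ⊕ 0`. Most axioms then transfer verbatim.

The other two rest on the invariance `|σ v τ| = τ* |v| τ` under permutation matrices, a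
consequence of `|α v β| ≤ ‖α‖ |(|v|) β|` because partial permutation matrices have norm at most
`1`. The positive part `[[|v*|, v], [v*, |v|]]` is `|Y| + Y` for the self-adjoint
`Y = [[0, v], [v*, 0]]`, whose rows can be permuted to `v* ⊕ v`. If `u` vanishes on the rows and
columns indexed by a set `t` and `v` outside them, a permutation of `M₂ₙ(V)` carries `u ⊕ v` to
`(u + v) ⊕ 0`; the same permutation fixes `u ⊕ 0`, hence `|u| ⊕ 0`, so `|u|` and `|v|` have the
supports of `u` and `v` and `|u + v| ⊕ 0 = (|u| + |v|) ⊕ 0`.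
-/

open Matrix

namespace PEquiv

variable {m n : Type*}

lemma ofSet_trans_self (s : Set m) [DecidablePred (· ∈ s)] :
    (ofSet s).trans (ofSet s) = ofSet s := by
  ext a b
  rw [← Option.mem_def, mem_trans]
  simp only [mem_ofSet_iff]
  aesop

variable [DecidableEq m] [DecidableEq n]

lemma conjTranspose_toMatrix (f : m ≃. n) :
    (f.toMatrix : Matrix m n ℂ)ᴴ = f.symm.toMatrix := by
  rw [conjTranspose, ← toMatrix_symm]
  exact map_toMatrix (starRingEnd ℂ) _

variable [Fintype m] [Fintype n]

lemma isStarProjection_toMatrix_ofSet (s : Set m) [DecidablePred (· ∈ s)] :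
    IsStarProjection ((ofSet s).toMatrix : Matrix m m ℂ) :=
  ⟨by rw [IsIdempotentElem, ← toMatrix_trans, ofSet_trans_self],
    by rw [IsSelfAdjoint, star_eq_conjTranspose, conjTranspose_toMatrix, ofSet_symm]⟩

lemma l2_opNorm_toMatrix_le_one (f : m ≃. n) : ‖(f.toMatrix : Matrix m n ℂ)‖ ≤ 1 := by
  have h := (isStarProjection_toMatrix_ofSet {b | (f.symm b).isSome}).norm_le
  rw [← symm_trans_self, toMatrix_trans, ← conjTranspose_toMatrix,
    l2_opNorm_conjTranspose_mul_self] at h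
  nlinarith [norm_nonneg (f.toMatrix : Matrix m n ℂ)]

end PEquiv

section ScalarAction

variable {V : Type*} [AddCommGroup V] [Module ℂ V]

lemma aSmul_toMatrix_apply {r m n : ℕ} (f : Fin r ≃. Fin m) (v : Matrix (Fin m) (Fin n) V)
    (i : Fin r) (j : Fin n) : aSmul f.toMatrix v i j = (f i).elim 0 fun k => v k j := by
  unfold aSmul
  cases hf : f i <;> simp [hf]

lemma smulB_toMatrix_apply {m n s : ℕ} (v : Matrix (Fin m) (Fin n) V) (g : Fin n ≃. Fin s)
    (i : Fin m) (j : Fin s) : smulB v g.toMatrix i j = (g.symm j).elim 0 fun k => v i k := by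
  unfold smulB
  cases hg : g.symm j <;> simp [hg, ← PEquiv.mem_iff_mem g, Option.mem_def]

lemma aSmul_toPEquiv_toMatrix {r m n : ℕ} (e : Fin r ≃ Fin m) (v : Matrix (Fin m) (Fin n) V) :
    aSmul e.toPEquiv.toMatrix v = v.submatrix e id := by
  ext i j
  simp [aSmul_toMatrix_apply]

lemma smulB_toPEquiv_toMatrix {m n s : ℕ} (v : Matrix (Fin m) (Fin n) V) (e : Fin n ≃ Fin s) :
    smulB v e.toPEquiv.toMatrix = v.submatrix id e.symm := by
  ext i j
  simp [smulB_toMatrix_apply, ← Equiv.toPEquiv_symm]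

lemma aSmul_one {m n : ℕ} (v : Matrix (Fin m) (Fin n) V) : aSmul 1 v = v := by
  simpa using aSmul_toPEquiv_toMatrix (Equiv.refl _) v

lemma smulB_one {m n : ℕ} (v : Matrix (Fin m) (Fin n) V) : smulB v 1 = v := by
  simpa using smulB_toPEquiv_toMatrix v (Equiv.refl _)

end ScalarAction

section DirectSum

variable {V : Type*} [AddCommGroup V] {m n r s : ℕ}

lemma dsum_eq_reindex_fromBlocks (v : Matrix (Fin m) (Fin n) V)
    (w : Matrix (Fin r) (Fin s) V) :
    dsum v w = reindex finSumFinEquiv finSumFinEquiv (fromBlocks v 0 0 w) := by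
  ext i j
  induction i using Fin.addCases <;> induction j using Fin.addCases <;> simp [dsum]

lemma dsum_inj {v v' : Matrix (Fin m) (Fin n) V} {w w' : Matrix (Fin r) (Fin s) V} :
    dsum v w = dsum v' w' ↔ v = v' ∧ w = w' := by
  rw [dsum_eq_reindex_fromBlocks, dsum_eq_reindex_fromBlocks, (reindex _ _).injective.eq_iff,
    fromBlocks_inj]
  simp

def blockSwap {N : ℕ} (t : Set (Fin N)) [DecidablePred (· ∈ t)] : Equiv.Perm (Fin (N + N)) :=
  Function.Involutive.toPerm
    (Fin.addCases (fun i => if i ∈ t then Fin.natAdd N i else Fin.castAdd N i)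
      (fun i => if i ∈ t then Fin.castAdd N i else Fin.natAdd N i))
    (fun p => by
      induction p using Fin.addCases with | left i | right i <;>
      by_cases hi : i ∈ t <;> simp [hi, -Fin.natAdd_eq_addNat])

@[simp] lemma blockSwap_castAdd {N : ℕ} (t : Set (Fin N)) [DecidablePred (· ∈ t)] (i : Fin N) :
    blockSwap t (Fin.castAdd N i) = if i ∈ t then Fin.natAdd N i else Fin.castAdd N i := by
  simp [blockSwap, Function.Involutive.toPerm, -Fin.natAdd_eq_addNat]

@[simp] lemma blockSwap_natAdd {N : ℕ} (t : Set (Fin N)) [DecidablePred (· ∈ t)] (i : Fin N) :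
    blockSwap t (Fin.natAdd N i) = if i ∈ t then Fin.castAdd N i else Fin.natAdd N i := by
  simp [blockSwap, Function.Involutive.toPerm, -Fin.natAdd_eq_addNat]

lemma dsum_submatrix_blockSwap {N : ℕ} (t : Set (Fin N))
    [DecidablePred (· ∈ t)] {u v : Matrix (Fin N) (Fin N) V}
    (hu : ∀ i j, i ∈ t ∨ j ∈ t → u i j = 0) (hv : ∀ i j, i ∉ t ∨ j ∉ t → v i j = 0) :
    (dsum u v).submatrix (blockSwap t) (blockSwap t) = dsum (u + v) 0 := by
  ext p q
  induction p using Fin.addCases with | left i | right i <;>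
  induction q using Fin.addCases with | left j | right j <;>
  by_cases hi : i ∈ t <;> by_cases hj : j ∈ t <;>
    simp [dsum_eq_reindex_fromBlocks, hi, hj, hu, hv, -Fin.natAdd_eq_addNat]

end DirectSum

lemma mstar_eq_conjTranspose {V : Type*} [AddCommGroup V] [StarAddMonoid V] {m n : ℕ}
    (v : Matrix (Fin m) (Fin n) V) : mstar v = vᴴ := rfl

lemma cnorm_toMatrix_le_one {r m : ℕ} (f : Fin r ≃. Fin m) :
    cnorm (f.toMatrix : Matrix _ _ ℂ) ≤ 1 :=
  PEquiv.l2_opNorm_toMatrix_le_one f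

namespace AMOS

variable {V : Type*} [AddCommGroup V] [Module ℂ V] [StarAddMonoid V] [StarModule ℂ V]
variable (A : AMOS V) {n : ℕ}

lemma abs_zero (n : ℕ) : A.abs n n 0 = 0 := by
  simpa using A.abs_real_smul n 0 0 (by simp [mstar_eq_conjTranspose])

lemma zero_mem_pos (n : ℕ) : 0 ∈ A.pos n := A.abs_zero n ▸ A.abs_mem n n 0

lemma smul_mem_pos {c : ℝ} (hc : 0 ≤ c) {p : Matrix (Fin n) (Fin n) V} (hp : p ∈ A.pos n) :
    (c : ℂ) • p ∈ A.pos n := by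
  have h := A.abs_real_smul n c p (A.pos_star n p hp)
  rw [A.abs_of_pos n p hp, abs_of_nonneg hc] at h
  exact h ▸ A.abs_mem n n _

lemma eq_zero_of_mem_pos_of_neg_mem_pos {p : Matrix (Fin n) (Fin n) V} (hp : p ∈ A.pos n)
    (hnp : -p ∈ A.pos n) : p = 0 := by
  have h := A.abs_real_smul n (-1) p (A.pos_star n p hp)
  simp only [Complex.ofReal_neg, Complex.ofReal_one, neg_smul, one_smul, abs_neg, abs_one,
    A.abs_of_pos n _ hnp, A.abs_of_pos n p hp] at h
  have h2 : (2 : ℂ) • p = 0 := by rw [two_smul]; nth_rewrite 1 [← h]; exact neg_add_cancel p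
  simpa using h2

lemma eq_of_sub_mem_pos {p q : Matrix (Fin n) (Fin n) V} (h₁ : p - q ∈ A.pos n)
    (h₂ : q - p ∈ A.pos n) : p = q :=
  sub_eq_zero.mp (A.eq_zero_of_mem_pos_of_neg_mem_pos h₁ (by rwa [neg_sub]))

lemma sub_mem_pos_of_smul_sub_mem_pos {c : ℝ} (hc : c ≤ 1) {p q : Matrix (Fin n) (Fin n) V}
    (hp : p ∈ A.pos n) (h : (c : ℂ) • p - q ∈ A.pos n) : p - q ∈ A.pos n := by
  have h' := A.pos_add n _ (A.smul_mem_pos (sub_nonneg.mpr hc) hp) _ h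
  rwa [show ((1 - c : ℝ) : ℂ) • p + ((c : ℂ) • p - q) = p - q by push_cast; module] at h'

lemma abs_abs {m : ℕ} (v : Matrix (Fin m) (Fin n) V) : A.abs n n (A.abs m n v) = A.abs m n v :=
  A.abs_of_pos n _ (A.abs_mem m n v)

lemma submatrix_mem_pos {m : ℕ} (e : Fin m ≃ Fin n) {p : Matrix (Fin n) (Fin n) V}
    (hp : p ∈ A.pos n) : p.submatrix e e ∈ A.pos m := by
  have h := A.pos_conj m n e.symm.toPEquiv.toMatrix p hp
  rwa [PEquiv.conjTranspose_toMatrix, ← Equiv.toPEquiv_symm, Equiv.symm_symm,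
    smulB_toPEquiv_toMatrix, aSmul_toPEquiv_toMatrix, Equiv.symm_symm, submatrix_submatrix] at h

lemma abs_sub_abs_submatrix_left_mem_pos {r m : ℕ} (e : Fin r ≃ Fin m)
    (v : Matrix (Fin m) (Fin n) V) : A.abs m n v - A.abs r n (v.submatrix e id) ∈ A.pos n := by
  have h := A.abs_smul_le r m n n e.toPEquiv.toMatrix v 1
  rw [smulB_one, smulB_one, abs_abs, aSmul_toPEquiv_toMatrix] at h
  exact A.sub_mem_pos_of_smul_sub_mem_pos (cnorm_toMatrix_le_one _) (A.abs_mem m n v) h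

lemma abs_submatrix_left {r m : ℕ} (e : Fin r ≃ Fin m) (v : Matrix (Fin m) (Fin n) V) :
    A.abs r n (v.submatrix e id) = A.abs m n v := by
  refine A.eq_of_sub_mem_pos ?_ (A.abs_sub_abs_submatrix_left_mem_pos e v)
  simpa using A.abs_sub_abs_submatrix_left_mem_pos e.symm (v.submatrix e id)

lemma submatrix_abs_sub_abs_submatrix_right_mem_pos {m s : ℕ} (e : Fin s ≃ Fin n)
    (v : Matrix (Fin m) (Fin n) V) :
    (A.abs m n v).submatrix e e - A.abs m s (v.submatrix id e) ∈ A.pos s := by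
  have h := A.abs_smul_le m m n s 1 v e.symm.toPEquiv.toMatrix
  rw [aSmul_one, smulB_toPEquiv_toMatrix, smulB_toPEquiv_toMatrix, Equiv.symm_symm,
    ← A.abs_submatrix_left e, submatrix_submatrix, Function.id_comp, Function.comp_id,
    A.abs_of_pos s _ (A.submatrix_mem_pos e (A.abs_mem m n v))] at h
  exact A.sub_mem_pos_of_smul_sub_mem_pos (by simpa using cnorm_toMatrix_le_one (PEquiv.refl _))
    (A.submatrix_mem_pos e (A.abs_mem m n v)) h

lemma abs_submatrix_right {m s : ℕ} (e : Fin s ≃ Fin n) (v : Matrix (Fin m) (Fin n) V) :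
    A.abs m s (v.submatrix id e) = (A.abs m n v).submatrix e e := by
  refine A.eq_of_sub_mem_pos ?_ (A.submatrix_abs_sub_abs_submatrix_right_mem_pos e v)
  have h := A.submatrix_mem_pos e
    (A.submatrix_abs_sub_abs_submatrix_right_mem_pos e.symm (v.submatrix id e))
  simpa [submatrix_sub] using h

lemma abs_submatrix {r m s : ℕ} (d : Fin r ≃ Fin m) (e : Fin s ≃ Fin n)
    (v : Matrix (Fin m) (Fin n) V) :
    A.abs r s (v.submatrix d e) = (A.abs m n v).submatrix e e := by
  rw [← A.abs_submatrix_right e, ← A.abs_submatrix_left d, submatrix_submatrix]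
  rfl

lemma mem_pos_iff_abs_eq {p : Matrix (Fin n) (Fin n) V} :
    p ∈ A.pos n ↔ A.abs n n p = p :=
  ⟨A.abs_of_pos n p, fun h => h ▸ A.abs_mem n n p⟩

lemma dsum_mem_pos_iff {m : ℕ} {u : Matrix (Fin m) (Fin m) V} {v : Matrix (Fin n) (Fin n) V} :
    dsum u v ∈ A.pos (m + n) ↔ u ∈ A.pos m ∧ v ∈ A.pos n := by
  simp only [mem_pos_iff_abs_eq, abs_dsum, dsum_inj]

lemma abs_dsum_zero {m : ℕ} (v : Matrix (Fin m) (Fin m) V) :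
    A.abs (m + n) (m + n) (dsum v (0 : Matrix (Fin n) (Fin n) V)) = dsum (A.abs m m v) 0 := by
  rw [abs_dsum, abs_zero]

lemma reindex_fromBlocks_abs_mem_pos {m : ℕ} (w : Matrix (Fin m) (Fin n) V) :
    reindex finSumFinEquiv finSumFinEquiv (fromBlocks (A.abs n m wᴴ) w wᴴ (A.abs m n w))
      ∈ A.pos (m + n) := by
  set Y := reindex finSumFinEquiv finSumFinEquiv (fromBlocks 0 w wᴴ 0)
  have hswap : Y.submatrix (finSumFinEquiv.symm.trans
      ((Equiv.sumComm (Fin n) (Fin m)).trans finSumFinEquiv)) id = dsum wᴴ w := by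
    ext i j
    induction i using Fin.addCases <;> induction j using Fin.addCases <;>
      simp [Y, dsum_eq_reindex_fromBlocks]
  have habs : A.abs (m + n) (m + n) Y = dsum (A.abs n m wᴴ) (A.abs m n w) := by
    rw [← A.abs_submatrix_left _ Y, hswap, abs_dsum]
  have hY : mstar Y = Y := by
    simp [Y, mstar_eq_conjTranspose, fromBlocks_conjTranspose]
  have h := (A.abs_add_self (m + n) Y hY).1
  rw [habs, dsum_eq_reindex_fromBlocks] at h
  convert h using 1
  ext i j
  induction i using Fin.addCases <;> induction j using Fin.addCases <;> simp [Y]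

lemma abs_apply_eq_zero_of_support {N : ℕ} (t : Set (Fin N)) [DecidablePred (· ∈ t)]
    {u : Matrix (Fin N) (Fin N) V} (hu : ∀ i j, i ∈ t ∨ j ∈ t → u i j = 0) :
    ∀ i j, i ∈ t ∨ j ∈ t → A.abs N N u i j = 0 := by
  have hfix := dsum_submatrix_blockSwap t hu (v := 0) (by simp)
  rw [add_zero] at hfix
  have h := A.abs_submatrix (blockSwap t) (blockSwap t) (dsum u 0)
  rw [hfix, abs_dsum_zero] at h
  intro i j hij
  have hij' := congrFun (congrFun h (Fin.castAdd N i)) (Fin.castAdd N j)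
  rcases hij with hi | hj
  · by_cases hj : j ∈ t <;>
      simpa [dsum_eq_reindex_fromBlocks, hi, hj, -Fin.natAdd_eq_addNat] using hij'
  · by_cases hi : i ∈ t <;>
      simpa [dsum_eq_reindex_fromBlocks, hi, hj, -Fin.natAdd_eq_addNat] using hij'

lemma abs_add_of_support {N : ℕ} (t : Set (Fin N)) [DecidablePred (· ∈ t)]
    {u v : Matrix (Fin N) (Fin N) V} (hu : ∀ i j, i ∈ t ∨ j ∈ t → u i j = 0)
    (hv : ∀ i j, i ∉ t ∨ j ∉ t → v i j = 0) :
    A.abs N N (u + v) = A.abs N N u + A.abs N N v := by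
  have h := A.abs_submatrix (blockSwap t) (blockSwap t) (dsum u v)
  rw [dsum_submatrix_blockSwap t hu hv, abs_dsum_zero, abs_dsum,
    dsum_submatrix_blockSwap t (A.abs_apply_eq_zero_of_support t hu)
      (A.abs_apply_eq_zero_of_support tᶜ (u := v) (by simpa using hv))] at h
  exact (dsum_inj.mp h).1

end AMOS

lemma fmul_JMat_left {N : ℕ} {a : FMat} (ha : ∀ i k, N ≤ i → a i k = 0) :
    fmul (JMat N) a = a := by
  funext i k
  rw [fmul, tsum_eq_single i (fun j hj => by simp [JMat, Ne.symm hj])]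
  by_cases hi : i < N
  · simp [JMat, hi]
  · simp [JMat, hi, ha i k (not_lt.mp hi)]

lemma fmul_JMat_right {N : ℕ} {a : FMat} (ha : ∀ i k, N ≤ k → a i k = 0) :
    fmul a (JMat N) = a := by
  funext i k
  rw [fmul, tsum_eq_single k (fun j hj => by simp [JMat, hj])]
  by_cases hk : k < N
  · simp [JMat, hk]
  · simp [JMat, hk, ha i k (not_lt.mp hk)]

lemma isFin_embC {r m : ℕ} (α : Matrix (Fin r) (Fin m) ℂ) : IsFin (embC α) :=
  ⟨max r m, fun i j h => by unfold embC; split_ifs <;> first | rfl | omega⟩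

lemma isFin_JMat (n : ℕ) : IsFin (JMat n) :=
  ⟨n, fun i j h => by simp only [JMat]; split_ifs <;> first | rfl | omega⟩

lemma fstar_embC {r m : ℕ} (α : Matrix (Fin r) (Fin m) ℂ) : fstar (embC α) = embC αᴴ := by
  funext i j
  unfold fstar embC
  split_ifs <;> simp

lemma embC_one (n : ℕ) : embC (1 : Matrix (Fin n) (Fin n) ℂ) = JMat n := by
  funext i j
  unfold embC JMat
  split_ifs <;> simp_all [one_apply, Fin.ext_iff]; omega

lemma embC_restrict_eq {N : ℕ} {a : FMat} (ha : ∀ i j, (N ≤ i ∨ N ≤ j) → a i j = 0) :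
    embC (Matrix.of fun i j : Fin N => a i j) = a := by
  funext i j
  unfold embC
  split_ifs <;> simp_all

lemma IsFin.exists_embC_restrict_eq {a : FMat} (ha : IsFin a) :
    ∃ n, ∀ N, n ≤ N → embC (Matrix.of fun i j : Fin N => a i j) = a := by
  obtain ⟨n, hn⟩ := ha
  exact ⟨n, fun N hN => embC_restrict_eq fun i j h => hn i j (by omega)⟩

lemma JMat_eq_finsetDiag (n : ℕ) : JMat n = finsetDiag (Finset.range n) := by
  funext i j
  simp [JMat, finsetDiag]

lemma embC_toMatrix_ofSet {N : ℕ} {I : Finset ℕ} (hI : ∀ a ∈ I, a < N) :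
    embC (PEquiv.ofSet {i : Fin N | (i : ℕ) ∈ I}).toMatrix = finsetDiag I := by
  funext k l
  unfold embC finsetDiag
  split_ifs <;> simp_all [Fin.ext_iff] <;> grind

def finTrunc (n N : ℕ) : Fin n ≃. Fin N where
  toFun i := if h : (i : ℕ) < N then some ⟨i, h⟩ else none
  invFun j := if h : (j : ℕ) < n then some ⟨j, h⟩ else none
  inv i j := by split_ifs <;> simp_all [Fin.ext_iff] <;> omega

lemma norm_restrict_embC_le (n : ℕ) {N : ℕ} (α : Matrix (Fin N) (Fin N) ℂ) :
    ‖(Matrix.of fun i j : Fin n => embC α i j)‖ ≤ cnorm α := by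
  set P : Matrix (Fin n) (Fin N) ℂ := (finTrunc n N).toMatrix
  have h : (Matrix.of fun i j : Fin n => embC α i j) = P * α * Pᴴ := by
    ext i j
    rw [PEquiv.conjTranspose_toMatrix, PEquiv.mul_toMatrix_apply, PEquiv.symm_symm]
    simp only [finTrunc, P, PEquiv.coe_mk, PEquiv.toMatrix_mul_apply]
    split_ifs <;> simp [embC, *]
  have hP : ‖P‖ ≤ 1 := PEquiv.l2_opNorm_toMatrix_le_one _
  rw [h]
  calc ‖P * α * Pᴴ‖ ≤ ‖P‖ * ‖α‖ * ‖Pᴴ‖ :=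
        (l2_opNorm_mul _ _).trans (by gcongr; exact l2_opNorm_mul _ _)
    _ ≤ 1 * ‖α‖ * 1 := by rw [l2_opNorm_conjTranspose]; gcongr
    _ = cnorm α := by rw [one_mul, mul_one, cnorm]

lemma fnorm_embC {N : ℕ} (α : Matrix (Fin N) (Fin N) ℂ) : fnorm (embC α) = cnorm α := by
  refine le_antisymm (ciSup_le fun n => norm_restrict_embC_le n α) ?_
  have hN : (Matrix.of fun i j : Fin N => embC α i j) = α := by
    ext i j
    simp [embC]
  calc cnorm α = ‖(Matrix.of fun i j : Fin N => embC α i j)‖ := by rw [hN, cnorm]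
    _ ≤ fnorm (embC α) :=
      le_ciSup ⟨cnorm α, Set.forall_mem_range.2 fun n => norm_restrict_embC_le n α⟩ N

def halfShift (o : ℕ) : Fin (o + o) ≃. Fin (o + o) where
  toFun p := if h : (p : ℕ) < o then some ⟨p + o, by omega⟩ else none
  invFun q := if h : o ≤ (q : ℕ) then some ⟨q - o, by omega⟩ else none
  inv p q := by split_ifs <;> simp_all [Fin.ext_iff] <;> omega

@[simp] lemma halfShift_castAdd (o : ℕ) (i : Fin o) :
    halfShift o (Fin.castAdd o i) = some (Fin.natAdd o i) := by
  simp [halfShift, Fin.ext_iff, add_comm]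

@[simp] lemma halfShift_natAdd (o : ℕ) (i : Fin o) : halfShift o (Fin.natAdd o i) = none := by
  simp [halfShift]

@[simp] lemma halfShift_symm_castAdd (o : ℕ) (i : Fin o) :
    (halfShift o).symm (Fin.castAdd o i) = none := by
  simp [halfShift, PEquiv.symm]

@[simp] lemma halfShift_symm_natAdd (o : ℕ) (i : Fin o) :
    (halfShift o).symm (Fin.natAdd o i) = some (Fin.castAdd o i) := by
  simp [halfShift, PEquiv.symm, Fin.ext_iff]

lemma embC_toMatrix_halfShift (o : ℕ) : embC (halfShift o).toMatrix = KMat o := by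
  funext k l
  unfold embC KMat
  split_ifs <;> simp_all [halfShift, Fin.ext_iff] <;> omega

namespace FBimod

variable {𝕍 : Type*} [AddCommGroup 𝕍] [Module ℂ 𝕍] (M : FBimod 𝕍)

lemma cut_eq_of_le {x : 𝕍} {n m : ℕ} (h : M.cut n x = x) (hnm : n ≤ m) : M.cut m x = x := by
  have hcol : ∀ i k, m ≤ k → JMat n i k = 0 := fun i k hk => by simp [JMat]; omega
  have hrow : ∀ i k, m ≤ i → JMat n i k = 0 := fun i k hi => by simp [JMat]; omega
  rw [← h, cut, cut, M.lsmul_rsmul _ _ _ (isFin_JMat n) (isFin_JMat m),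
    ← M.rsmul_mul _ _ _ (isFin_JMat n) (isFin_JMat m), fmul_JMat_right hcol,
    ← M.mul_lsmul _ _ _ (isFin_JMat m) (isFin_JMat n), fmul_JMat_left hrow]

lemma cut_ord (x : 𝕍) : M.cut (M.ord x) x = x := Nat.sInf_mem (M.nondeg x)

lemma ord_le_of_cut_eq {x : 𝕍} {n : ℕ} (h : M.cut n x = x) : M.ord x ≤ n := Nat.sInf_le h

end FBimod

def limitCone {V 𝕍 : Type*} [AddCommGroup V] [Module ℂ V] [StarAddMonoid V] [StarModule ℂ V]
    (A : AMOS V) (T : ∀ n : ℕ, Matrix (Fin n) (Fin n) V → 𝕍) : Set 𝕍 :=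
  {x | ∃ n, ∃ v ∈ A.pos n, T n v = x}

lemma abs_of_mem_limitCone {V 𝕍 : Type*} [AddCommGroup V] [Module ℂ V] [StarAddMonoid V]
    [StarModule ℂ V] {A : AMOS V} {T : ∀ n : ℕ, Matrix (Fin n) (Fin n) V → 𝕍} {af : 𝕍 → 𝕍}
    (habs : ∀ n v, af (T n v) = T n (A.abs n n v)) {x : 𝕍} (hx : x ∈ limitCone A T) :
    af x = x := by
  obtain ⟨n, v, hv, rfl⟩ := hx
  rw [habs, A.abs_of_pos n v hv]

namespace IsMatLimit

variable {V 𝕍 : Type*} [AddCommGroup V] [Module ℂ V] [StarAddMonoid V] [StarModule ℂ V]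
  [AddCommGroup 𝕍] [Module ℂ 𝕍] {M : FBimod 𝕍} {T : ∀ n : ℕ, Matrix (Fin n) (Fin n) V → 𝕍}

lemma map_sub (hT : IsMatLimit V M T) (n : ℕ) (u v : Matrix (Fin n) (Fin n) V) :
    T n (u - v) = T n u - T n v := by
  rw [sub_eq_add_neg, hT.map_add, ← neg_one_smul ℂ v, hT.map_smul, neg_one_smul,
    ← sub_eq_add_neg]

lemma ord_map_le (hT : IsMatLimit V M T) (n : ℕ) (v : Matrix (Fin n) (Fin n) V) :
    M.ord (T n v) ≤ n :=
  M.ord_le_of_cut_eq (hT.cutT n v)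

lemma exists_map_eq (hT : IsMatLimit V M T) {x : 𝕍} {N : ℕ} (hN : M.ord x ≤ N) :
    ∃ v, T N v = x :=
  hT.range N x (M.cut_eq_of_le (M.cut_ord x) hN)

lemma mem_pos_iff_of_map_eq_of_le (hT : IsMatLimit V M T) (A : AMOS V) {n N : ℕ}
    (hnN : n ≤ N) {v : Matrix (Fin n) (Fin n) V} {z : Matrix (Fin N) (Fin N) V}
    (h : T n v = T N z) :
    v ∈ A.pos n ↔ z ∈ A.pos N := by
  obtain ⟨m, rfl⟩ := Nat.exists_eq_add_of_le hnN
  obtain rfl : z = dsum v 0 := hT.inj _ (by rw [hT.embed, h])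
  simp [A.dsum_mem_pos_iff, A.zero_mem_pos]

lemma mem_pos_iff_of_map_eq (hT : IsMatLimit V M T) (A : AMOS V) {n N : ℕ}
    {v : Matrix (Fin n) (Fin n) V} {z : Matrix (Fin N) (Fin N) V} (h : T n v = T N z) :
    v ∈ A.pos n ↔ z ∈ A.pos N := by
  rcases le_total n N with hnN | hNn
  · exact hT.mem_pos_iff_of_map_eq_of_le A hnN h
  · exact (hT.mem_pos_iff_of_map_eq_of_le A hNn h.symm).symm

lemma map_mem_limitCone_iff (hT : IsMatLimit V M T) (A : AMOS V) {N : ℕ}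
    {z : Matrix (Fin N) (Fin N) V} : T N z ∈ limitCone A T ↔ z ∈ A.pos N :=
  ⟨fun ⟨_, _, hv, h⟩ => (hT.mem_pos_iff_of_map_eq A h).1 hv, fun hz => ⟨N, z, hz, rfl⟩⟩

lemma exists_mem_pos_of_mem_limitCone (hT : IsMatLimit V M T) (A : AMOS V) {x : 𝕍}
    (hx : x ∈ limitCone A T) {N : ℕ} (hN : M.ord x ≤ N) : ∃ v ∈ A.pos N, T N v = x := by
  obtain ⟨v, rfl⟩ := hT.exists_map_eq hN
  exact ⟨v, (hT.map_mem_limitCone_iff A).1 hx, rfl⟩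

lemma map_abs (hT : IsMatLimit V M T) (A : AMOS V) {af : 𝕍 → 𝕍}
    (haf : ∀ (n : ℕ) (v : Matrix (Fin n) (Fin n) V), M.ord (T n v) = n →
      af (T n v) = T n (A.abs n n v))
    (n : ℕ) (v : Matrix (Fin n) (Fin n) V) : af (T n v) = T n (A.abs n n v) := by
  obtain ⟨o, ho, w, hw, hafw⟩ :
      ∃ o ≤ n, ∃ w, T o w = T n v ∧ af (T o w) = T o (A.abs o o w) := by
    obtain ⟨w, hw⟩ := hT.exists_map_eq (le_refl (M.ord (T n v)))
    exact ⟨_, hT.ord_map_le n v, w, hw, haf _ w (by rw [hw])⟩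
  obtain ⟨m, rfl⟩ := Nat.exists_eq_add_of_le ho
  obtain rfl : v = dsum w 0 := hT.inj _ (by rw [hT.embed, hw])
  rw [← hw, hafw, A.abs_dsum_zero, hT.embed]

lemma rsmul_map_embC (hT : IsMatLimit V M T) (N : ℕ) (v : Matrix (Fin N) (Fin N) V)
    (β : Matrix (Fin N) (Fin N) ℂ) : M.rsmul (T N v) (embC β) = T N (smulB v β) := by
  rw [← aSmul_one (smulB v β), hT.act, embC_one]
  conv_lhs => rw [← hT.cutT N v]
  rw [FBimod.cut, M.lsmul_rsmul _ _ _ (isFin_JMat N) (isFin_embC β),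
    ← M.rsmul_mul _ _ _ (isFin_JMat N) (isFin_embC β),
    fmul_JMat_left fun i k hi => by unfold embC; rw [dif_neg (by omega)]]

lemma isCone_limitCone (hT : IsMatLimit V M T) (A : AMOS V) : M.IsCone (limitCone A T) := by
  refine ⟨?_, ?_, ?_⟩
  · rintro _ ⟨n, v, hv, rfl⟩
    rw [hT.map_star, A.pos_star n v hv]
  · rintro x hx y hy
    obtain ⟨N, hxN, hyN⟩ : ∃ N, M.ord x ≤ N ∧ M.ord y ≤ N :=
      ⟨_, le_max_left _ _, le_max_right _ _⟩
    obtain ⟨u, hu, rfl⟩ := hT.exists_mem_pos_of_mem_limitCone A hx hxN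
    obtain ⟨v, hv, rfl⟩ := hT.exists_mem_pos_of_mem_limitCone A hy hyN
    exact ⟨N, u + v, A.pos_add N u hu v hv, hT.map_add N u v⟩
  · rintro x hx a ha
    obtain ⟨n, hn⟩ := ha.exists_embC_restrict_eq
    obtain ⟨N, hxN, hnN⟩ : ∃ N, M.ord x ≤ N ∧ n ≤ N := ⟨_, le_max_left _ _, le_max_right _ _⟩
    obtain ⟨v, hv, rfl⟩ := hT.exists_mem_pos_of_mem_limitCone A hx hxN
    rw [FBimod.conj, ← hn N hnN, fstar_embC, ← hT.act]
    exact ⟨N, _, A.pos_conj N N _ v hv, rfl⟩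

variable {A : AMOS V} {af : 𝕍 → 𝕍}

lemma abs_mem_limitCone (hT : IsMatLimit V M T)
    (habs : ∀ n v, af (T n v) = T n (A.abs n n v)) (x : 𝕍) : af x ∈ limitCone A T := by
  obtain ⟨v, hv⟩ := hT.exists_map_eq (le_refl (M.ord x))
  rw [← hv, habs]
  exact ⟨_, _, A.abs_mem _ _ v, rfl⟩

lemma ord_abs_le (hT : IsMatLimit V M T)
    (habs : ∀ n v, af (T n v) = T n (A.abs n n v)) (x : 𝕍) : M.ord (af x) ≤ M.ord x := by
  obtain ⟨v, hv⟩ := hT.exists_map_eq (le_refl (M.ord x))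
  calc M.ord (af x) = M.ord (T _ (A.abs _ _ v)) := by rw [← habs, hv]
    _ ≤ M.ord x := hT.ord_map_le _ _

lemma smul_abs_sub_abs_mem_limitCone (hT : IsMatLimit V M T)
    (habs : ∀ n v, af (T n v) = T n (A.abs n n v)) {a b : FMat} (ha : IsFin a) (hb : IsFin b)
    (x : 𝕍) : (fnorm a : ℂ) • af (M.rsmul (af x) b) - af (M.lsmul a (M.rsmul x b))
      ∈ limitCone A T := by
  obtain ⟨na, hna⟩ := ha.exists_embC_restrict_eq
  obtain ⟨nb, hnb⟩ := hb.exists_embC_restrict_eq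
  obtain ⟨N, hxN, haN, hbN⟩ : ∃ N, M.ord x ≤ N ∧ na ≤ N ∧ nb ≤ N :=
    ⟨max (M.ord x) (max na nb), by omega, by omega, by omega⟩
  obtain ⟨v, rfl⟩ := hT.exists_map_eq hxN
  rw [← hna N haN, ← hnb N hbN, ← hT.act, habs, hT.rsmul_map_embC, habs, habs, fnorm_embC,
    ← hT.map_smul, ← hT.map_sub]
  exact ⟨N, _, A.abs_smul_le N N N N _ v _, rfl⟩

lemma abs_sub_map_eq_add_iff (hT : IsMatLimit V M T)
    (habs : ∀ n v, af (T n v) = T n (A.abs n n v)) {N : ℕ} (u v : Matrix (Fin N) (Fin N) V) :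
    af (T N u - T N v) = T N u + T N v ↔ A.abs N N (u - v) = u + v := by
  rw [← hT.map_sub, habs, ← hT.map_add, (hT.inj N).eq_iff]

lemma exists_common_level (hT : IsMatLimit V M T) {u v w : 𝕍} (hu : u ∈ limitCone A T)
    (hv : v ∈ limitCone A T) (hw : w ∈ limitCone A T) :
    ∃ N, ∃ u' ∈ A.pos N, ∃ v' ∈ A.pos N, ∃ w' ∈ A.pos N,
      T N u' = u ∧ T N v' = v ∧ T N w' = w := by
  obtain ⟨N, huN, hvN, hwN⟩ : ∃ N, M.ord u ≤ N ∧ M.ord v ≤ N ∧ M.ord w ≤ N :=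
    ⟨max (M.ord u) (max (M.ord v) (M.ord w)), by omega, by omega, by omega⟩
  obtain ⟨u', hu', rfl⟩ := hT.exists_mem_pos_of_mem_limitCone A hu huN
  obtain ⟨v', hv', rfl⟩ := hT.exists_mem_pos_of_mem_limitCone A hv hvN
  obtain ⟨w', hw', rfl⟩ := hT.exists_mem_pos_of_mem_limitCone A hw hwN
  exact ⟨N, u', hu', v', hv', w', hw', rfl, rfl, rfl⟩

lemma absorb (hT : IsMatLimit V M T) (habs : ∀ n v, af (T n v) = T n (A.abs n n v))
    {u v w : 𝕍} (hu : u ∈ limitCone A T) (hv : v ∈ limitCone A T) (hw : w ∈ limitCone A T)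
    (huv : af (u - v) = u + v) (hvw : v - w ∈ limitCone A T) : af (u - w) = u + w := by
  obtain ⟨N, u, hu', v, hv', w, hw', rfl, rfl, rfl⟩ := hT.exists_common_level hu hv hw
  rw [hT.abs_sub_map_eq_add_iff habs] at huv ⊢
  rw [← hT.map_sub, hT.map_mem_limitCone_iff] at hvw
  exact A.absorb N u hu' v hv' w hw' huv hvw

lemma ortho_pm (hT : IsMatLimit V M T) (habs : ∀ n v, af (T n v) = T n (A.abs n n v))
    {u v w : 𝕍} (hu : u ∈ limitCone A T) (hv : v ∈ limitCone A T) (hw : w ∈ limitCone A T)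
    (huv : af (u - v) = u + v) (huw : af (u - w) = u + w) :
    af (u - af (v + w)) = u + af (v + w) ∧ af (u - af (v - w)) = u + af (v - w) := by
  obtain ⟨N, u, hu', v, hv', w, hw', rfl, rfl, rfl⟩ := hT.exists_common_level hu hv hw
  rw [hT.abs_sub_map_eq_add_iff habs] at huv huw
  rw [← hT.map_add, ← hT.map_sub, habs, habs, hT.abs_sub_map_eq_add_iff habs,
    hT.abs_sub_map_eq_add_iff habs]
  exact A.ortho_pm N u hu' v hv' w hw' huv huw

lemma pairPlus_abs_add_san_mem_limitCone (hT : IsMatLimit V M T)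
    (habs : ∀ n v, af (T n v) = T n (A.abs n n v)) (o : ℕ) (w : Matrix (Fin o) (Fin o) V) :
    M.pairPlus o (af (M.star (T o w))) (af (T o w)) + M.san o (T o w) ∈ limitCone A T := by
  have hJ :
      JMat o = embC (PEquiv.ofSet {p : Fin (o + o) | (p : ℕ) ∈ Finset.range o}).toMatrix := by
    rw [embC_toMatrix_ofSet fun a ha => (Finset.mem_range.1 ha).trans_le (Nat.le_add_right o o),
      JMat_eq_finsetDiag]
  have hK := embC_toMatrix_halfShift o
  -- `𝔍ₒ` and `𝔎ₒ` come from 0/1 matrices at level `o + o`, where the whole expression becomes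
  -- the block matrix `[[|w*|, w], [w*, |w|]]`.
  rw [FBimod.pairPlus, FBimod.san, hT.map_star, habs, habs, mstar_eq_conjTranspose,
    ← hK, fstar_embC, hJ, ← hT.embed o o (A.abs o o wᴴ), ← hT.embed o o (A.abs o o w),
    ← hT.embed o o w, ← hT.embed o o wᴴ, ← hT.act, ← hT.act, ← hT.act, ← hT.map_add,
    ← hT.map_add, ← hT.map_add]
  refine (hT.map_mem_limitCone_iff A).2 ?_
  convert A.reindex_fromBlocks_abs_mem_pos w using 1
  ext p q
  simp only [aSmul_toMatrix_apply, smulB_toMatrix_apply, PEquiv.conjTranspose_toMatrix,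
    PEquiv.ofSet_symm, Matrix.add_apply]
  induction p using Fin.addCases <;> induction q using Fin.addCases <;>
    simp [dsum_eq_reindex_fromBlocks, PEquiv.ofSet, -Fin.natAdd_eq_addNat]

lemma apply_eq_zero_of_finsetDiag (hT : IsMatLimit V M T) {N : ℕ} {I : Finset ℕ}
    (hI : ∀ a ∈ I, a < N) {u : Matrix (Fin N) (Fin N) V}
    (hu : M.lsmul (finsetDiag I) (M.rsmul (T N u) (finsetDiag I)) = T N u) (i j : Fin N)
    (hij : (i : ℕ) ∉ I ∨ (j : ℕ) ∉ I) : u i j = 0 := by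
  rw [← embC_toMatrix_ofSet hI, ← hT.act] at hu
  rw [← hT.inj N hu]
  simp only [aSmul_toMatrix_apply, smulB_toMatrix_apply, PEquiv.ofSet_symm]
  by_cases hi : (i : ℕ) ∈ I <;> by_cases hj : (j : ℕ) ∈ I <;> simp_all [PEquiv.ofSet]

lemma abs_add_of_fIndep (hT : IsMatLimit V M T) (habs : ∀ n v, af (T n v) = T n (A.abs n n v))
    {u v : 𝕍} (h : M.FIndep u v) : af (u + v) = af u + af v := by
  obtain ⟨I, J, hIJ, hu, hv⟩ := h
  obtain ⟨K, hK⟩ := (I ∪ J).exists_nat_subset_range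
  obtain ⟨N, huN, hvN, hKN⟩ : ∃ N, M.ord u ≤ N ∧ M.ord v ≤ N ∧ K ≤ N :=
    ⟨max (M.ord u) (max (M.ord v) K), by omega, by omega, by omega⟩
  have hIN : ∀ a ∈ I, a < N := fun a ha =>
    (Finset.mem_range.1 (hK (Finset.mem_union_left J ha))).trans_le hKN
  have hJN : ∀ a ∈ J, a < N := fun a ha =>
    (Finset.mem_range.1 (hK (Finset.mem_union_right I ha))).trans_le hKN
  obtain ⟨u, rfl⟩ := hT.exists_map_eq huN
  obtain ⟨v, rfl⟩ := hT.exists_map_eq hvN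
  rw [← hT.map_add, habs, habs, habs, ← hT.map_add,
    A.abs_add_of_support {i : Fin N | (i : ℕ) ∈ J}
      (fun i j hij => hT.apply_eq_zero_of_finsetDiag hIN hu i j
        (hij.imp (fun hi => Finset.disjoint_right.1 hIJ hi)
          fun hj => Finset.disjoint_right.1 hIJ hj))
      (hT.apply_eq_zero_of_finsetDiag hJN hv)]

end IsMatLimit

/-- The matricial inductive limit `(𝔙, 𝔙⁺)` of an absolutely matrix
ordered space `V`, equipped with `|𝔳| := T_{o(𝔳)}(|T_{o(𝔳)}⁻¹(𝔳)|)`, is a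
non-degenerate absolutely ordered `𝔉`-bimodule; in particular `|·|` is additive on
`𝔉`-independent elements. -/
theorem statement5 {V 𝕍 : Type*} [AddCommGroup V] [Module ℂ V] [StarAddMonoid V]
    [StarModule ℂ V] [AddCommGroup 𝕍] [Module ℂ 𝕍] (A : AMOS V) (M : FBimod 𝕍)
    (T : ∀ n : ℕ, Matrix (Fin n) (Fin n) V → 𝕍) (hT : IsMatLimit V M T)
    (af : 𝕍 → 𝕍)
    (haf : ∀ (n : ℕ) (v : Matrix (Fin n) (Fin n) V), M.ord (T n v) = n →
      af (T n v) = T n (A.abs n n v)) :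
    M.IsAbsOrd {x : 𝕍 | ∃ n, ∃ v ∈ A.pos n, T n v = x} af ∧
      (∀ u v : 𝕍, M.FIndep u v → af (u + v) = af u + af v) := by
  have habs := hT.map_abs A haf
  have indep_add : ∀ u v : 𝕍, M.FIndep u v → af (u + v) = af u + af v :=
    fun _ _ h => hT.abs_add_of_fIndep habs h
  refine ⟨⟨hT.isCone_limitCone A, hT.abs_mem_limitCone habs, hT.ord_abs_le habs,
    fun _ hx => abs_of_mem_limitCone habs hx, fun x => ?_,
    fun _ _ ha hb x => hT.smul_abs_sub_abs_mem_limitCone habs ha hb x, indep_add,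
    fun _ hu _ hv _ hw => hT.absorb habs hu hv hw,
    fun _ hu _ hv _ hw => hT.ortho_pm habs hu hv hw⟩, indep_add⟩
  obtain ⟨w, hw⟩ := hT.exists_map_eq (le_refl (M.ord x))
  have h := hT.pairPlus_abs_add_san_mem_limitCone habs (M.ord x) w
  rwa [hw] at h
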